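/- The sequence n·α_n converges to 4 as n → ∞, where α_n = Σ_{q=1}^{n-1} 2^{min(q,n-q)}/C(n,q). In other words, α_n is asymptotically equivalent to 4/n. -/

import Mathlib

/-!
The terms `q = 1` and `q = n - 1` contribute exactly `4 / n`. For `2 ≤ m ≤ n / 2`, the identity
`C(n, m) C(m, 2) = C(n, 2) C(n - 2, m - 2)` together with
`C(n - 2, m - 2) ≥ C(2(m - 2), m - 2) ≥ 4 ^ (m - 2) / (2m - 3)` gives `C(n, m) ≥ 4 ^ m n² / (64 m³)`.
Hence every other term is `O(m³ 2⁻ᵐ / n²)` with `m = min q (n - q)`, and since `∑ m³ 2⁻ᵐ < ∞`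
they add up to `O(1 / n²)`.
-/

noncomputable def alpha (n : ℕ) : ℝ :=
  ∑ q ∈ Finset.Icc 1 (n - 1), (2 : ℝ) ^ (min q (n - q)) / (Nat.choose n q : ℝ)

open Finset Filter Topology

theorem four_pow_mul_sq_le_choose {n m : ℕ} (hm : 2 ≤ m) (hmn : 2 * m ≤ n) :
    (4 : ℝ) ^ m * n ^ 2 ≤ 64 * m ^ 3 * n.choose m := by
  obtain ⟨k, rfl⟩ : ∃ k, m = k + 2 := ⟨m - 2, by omega⟩
  have hmul : (n.choose (k + 2) : ℝ) * ((k + 2) * (k + 1) / 2) =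
      n * (n - 1) / 2 * (n - 2).choose k := by
    have h : (n.choose (k + 2) : ℝ) * (k + 2).choose 2 = n.choose 2 * (n - 2).choose k := by
      exact_mod_cast Nat.choose_mul (n := n) (k := k + 2) (s := 2) (by omega)
    rw [Nat.cast_choose_two, Nat.cast_choose_two] at h
    push_cast at h
    linear_combination h
  have hcentral : (4 : ℝ) ^ k ≤ (2 * k + 1) * (n - 2).choose k := by
    exact_mod_cast (Nat.four_pow_le_two_mul_add_one_mul_central_binom k).trans
      (Nat.mul_le_mul_left _ (Nat.choose_le_choose k (by omega)))
  have hn : 2 * ((k : ℝ) + 2) ≤ n := by exact_mod_cast hmn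
  push_cast
  calc (4 : ℝ) ^ (k + 2) * (n : ℝ) ^ 2 = 4 ^ k * (16 * (n : ℝ) ^ 2) := by ring
    _ ≤ ((2 * k + 1) * (n - 2).choose k) * (64 * ((n : ℝ) * (n - 1) / 2)) := by
        refine mul_le_mul hcentral ?_ (by positivity) (by positivity)
        nlinarith
    _ = 64 * ((2 * (k : ℝ) + 1) * ((k + 2) * (k + 1) / 2)) * n.choose (k + 2) := by
        linear_combination (-64 * (2 * k + 1) : ℝ) * hmul
    _ ≤ 64 * ((k : ℝ) + 2) ^ 3 * n.choose (k + 2) := by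
        gcongr
        nlinarith

theorem two_pow_div_choose_le {n m : ℕ} (hm : 2 ≤ m) (hmn : 2 * m ≤ n) :
    (2 : ℝ) ^ m / n.choose m ≤ 64 * (m ^ 3 * (1 / 2) ^ m) / n ^ 2 := by
  have hn : (0 : ℝ) < n := by exact_mod_cast (show 0 < n by omega)
  have hchoose : (0 : ℝ) < n.choose m := by exact_mod_cast Nat.choose_pos (by omega)
  rw [div_le_div_iff₀ hchoose (by positivity)]
  calc (2 : ℝ) ^ m * (n : ℝ) ^ 2 = (1 / 2) ^ m * (4 ^ m * (n : ℝ) ^ 2) := by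
        rw [← mul_assoc, ← mul_pow]; norm_num
    _ ≤ (1 / 2) ^ m * (64 * (m : ℝ) ^ 3 * n.choose m) := by
        exact mul_le_mul_of_nonneg_left (four_pow_mul_sq_le_choose hm hmn) (by positivity)
    _ = 64 * (m ^ 3 * (1 / 2) ^ m) * n.choose m := by ring

theorem choose_min_sub {n q : ℕ} (hq : q ≤ n) : n.choose (min q (n - q)) = n.choose q := by
  rcases le_total q (n - q) with h | h
  · rw [min_eq_left h]
  · rw [min_eq_right h, Nat.choose_symm hq]

theorem two_pow_min_div_choose_le {n q : ℕ} (hq : q ∈ Icc 2 (n - 2)) :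
    (2 : ℝ) ^ min q (n - q) / n.choose q ≤
      64 * (q ^ 3 * (1 / 2) ^ q + ((n - q : ℕ) : ℝ) ^ 3 * (1 / 2) ^ (n - q)) / n ^ 2 := by
  rw [mem_Icc] at hq
  rw [← choose_min_sub (by omega : q ≤ n)]
  refine (two_pow_div_choose_le (by omega) (by omega)).trans ?_
  gcongr
  rcases le_total q (n - q) with h | h
  · rw [min_eq_left h]; exact le_add_of_nonneg_right (by positivity)
  · rw [min_eq_right h]; exact le_add_of_nonneg_left (by positivity)

theorem sum_reflect_le_tsum {f : ℕ → ℝ} (hf : Summable f) (hf0 : ∀ m, 0 ≤ f m) {n : ℕ}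
    {s : Finset ℕ} (hs : ∀ q ∈ s, q ≤ n) : ∑ q ∈ s, f (n - q) ≤ ∑' m, f m := by
  classical
  rw [← sum_image fun a ha b hb hab => by have := hs a ha; have := hs b hb; omega]
  exact hf.sum_le_tsum _ fun m _ => hf0 m

noncomputable def alphaInterior (n : ℕ) : ℝ :=
  ∑ q ∈ Icc 2 (n - 2), (2 : ℝ) ^ min q (n - q) / n.choose q

theorem alpha_eq_add_alphaInterior {n : ℕ} (hn : 3 ≤ n) : alpha n = 4 / n + alphaInterior n := by
  have hpred : n - 1 = n - 2 + 1 := by omega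
  rw [alpha, alphaInterior, ← insert_Icc_add_one_left_eq_Icc (by omega), sum_insert (by simp),
    hpred, sum_Icc_succ_top (by omega), show n - (n - 2 + 1) = 1 by omega, ← hpred,
    Nat.choose_symm (by omega), min_eq_left (by omega), min_eq_right (by omega),
    Nat.choose_one_right, one_add_one_eq_two]
  ring

theorem alphaInterior_nonneg (n : ℕ) : 0 ≤ alphaInterior n :=
  sum_nonneg fun _ _ => by positivity

theorem alphaInterior_le (n : ℕ) :
    alphaInterior n ≤ 128 * (∑' m : ℕ, (m : ℝ) ^ 3 * (1 / 2) ^ m) / n ^ 2 := by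
  set g : ℕ → ℝ := fun m => (m : ℝ) ^ 3 * (1 / 2) ^ m
  have hg : Summable g := summable_pow_mul_geometric_of_norm_lt_one 3 (by norm_num)
  have hg0 : ∀ m, 0 ≤ g m := fun m => by positivity
  calc alphaInterior n ≤ ∑ q ∈ Icc 2 (n - 2), 64 * (g q + g (n - q)) / n ^ 2 :=
        sum_le_sum fun q hq => two_pow_min_div_choose_le hq
    _ = 64 * (∑ q ∈ Icc 2 (n - 2), g q + ∑ q ∈ Icc 2 (n - 2), g (n - q)) / n ^ 2 := by
        rw [← sum_div, ← mul_sum, sum_add_distrib]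
    _ ≤ 64 * (∑' m, g m + ∑' m, g m) / n ^ 2 := by
        gcongr
        · exact hg.sum_le_tsum _ fun m _ => hg0 m
        · exact sum_reflect_le_tsum hg hg0 fun q hq => by rw [mem_Icc] at hq; omega
    _ = 128 * (∑' m, g m) / n ^ 2 := by ring

theorem tendsto_natCast_mul_alphaInterior :
    Tendsto (fun n : ℕ => (n : ℝ) * alphaInterior n) atTop (𝓝 0) := by
  set C := 128 * ∑' m : ℕ, (m : ℝ) ^ 3 * (1 / 2) ^ m
  refine squeeze_zero (fun n => mul_nonneg n.cast_nonneg (alphaInterior_nonneg n)) (fun n => ?_)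
    (tendsto_const_div_atTop_nhds_zero_nat C)
  calc (n : ℝ) * alphaInterior n ≤ n * (C / n ^ 2) :=
        mul_le_mul_of_nonneg_left (alphaInterior_le n) n.cast_nonneg
    _ = C / n := by
        rcases eq_or_ne (n : ℝ) 0 with hn | hn
        · simp [hn]
        · field_simp

theorem alpha_asymptotic :
    Filter.Tendsto (fun n : ℕ => (n : ℝ) * alpha n) Filter.atTop (nhds 4) := by
  have h := tendsto_natCast_mul_alphaInterior.const_add 4
  rw [add_zero] at h
  refine h.congr' ?_
  filter_upwards [eventually_ge_atTop 3] with n hn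
  have hn0 : (n : ℝ) ≠ 0 := by positivity
  rw [alpha_eq_add_alphaInterior hn, mul_add, mul_div_cancel₀ _ hn0]
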